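/- Let P be a finite stochastic matrix in canonical form with recurrent blocks R_1,…,R_m (each irreducible with unique stationary distribution g_i), transient block T, and transient-to-recurrent blocks S_1,…,S_m. Then the Cesàro limit of P has recurrent blocks R_{i,*} = 1 g_i^⊤ and transient-to-recurrent blocks S_{i,*} = (I - T)^{-1} S_i R_{i,*}, with the block corresponding to transient-to-transient transitions equal to zero. -/

import Mathlib

open Matrix Filter Finset

/-- A row-stochastic matrix: nonnegative entries and rows summing to 1. -/
def IsStochastic {n : Type*} [Fintype n] (P : Matrix n n ℝ) : Prop :=
  (∀ i j, 0 ≤ P i j) ∧ ∀ i, ∑ j, P i j = 1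

/-- `Pstar` is the Cesàro limit of the powers of `P`. -/
def CesaroLimit {n : Type*} [Fintype n] [DecidableEq n] (P Pstar : Matrix n n ℝ) : Prop :=
  Filter.Tendsto (fun H : ℕ => (H : ℝ)⁻¹ • ∑ i ∈ Finset.range H, P ^ i)
    Filter.atTop (nhds Pstar)

/-! The Cesàro limit `P*` is a limit of averages of powers of `P`, so it inherits what those
averages share: it is stochastic, `P * P* = P* * P = P*`, and it moves no mass out of a closed
class. On the recurrent class `i`, every row of `P*` is then an `Rᵢ`-invariant probability vector,
and irreducibility makes that vector unique: the positive part of an invariant signed vector is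
again invariant, and the support of a nonnegative invariant vector is empty or everything.
On a transient row, `P * P* = P*` reads blockwise `X = S * P*_rec + T * X`, and `1 - T` is
invertible because `1` is not an eigenvalue of `T`; hence `X = (1 - T)⁻¹ * S * P*_rec`, which
vanishes on the transient columns. -/

open Function Set Topology

section Absorbing

def IsAbsorbing {n α : Type*} [Zero α] (M : Matrix n n α) (s : Set n) : Prop :=
  ∀ x ∈ s, ∀ y ∉ s, M x y = 0

variable {n ι α : Type*} [Fintype n] [Semiring α] {M N : Matrix n n α} {s : Set n}

theorem IsAbsorbing.mul (hM : IsAbsorbing M s) (hN : IsAbsorbing N s) :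
    IsAbsorbing (M * N) s := fun x hx y hy => by
  refine (mul_apply ..).trans (Finset.sum_eq_zero fun z _ => ?_)
  by_cases hz : z ∈ s
  · rw [hN z hz y hy, mul_zero]
  · rw [hM x hx z hz, zero_mul]

theorem IsAbsorbing.pow [DecidableEq n] (hM : IsAbsorbing M s) (k : ℕ) :
    IsAbsorbing (M ^ k) s := by
  induction k with
  | zero => exact fun x hx y hy => one_apply_ne (by rintro rfl; exact hy hx)
  | succ k ih => rw [pow_succ]; exact ih.mul hM

variable [Fintype ι] {e : ι → n}

theorem IsAbsorbing.sum_comp (hM : IsAbsorbing M (range e)) (he : Injective e) (a : ι)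
    (f : n → α) : ∑ b, M (e a) (e b) * f (e b) = ∑ z, M (e a) z * f z :=
  Fintype.sum_of_injective e he _ _
    (fun z hz => by rw [hM _ ⟨a, rfl⟩ z hz, zero_mul]) fun _ => rfl

theorem IsAbsorbing.submatrix_mul (hM : IsAbsorbing M (range e)) (he : Injective e) :
    (M * N).submatrix e e = M.submatrix e e * N.submatrix e e := by
  ext a c
  exact (hM.sum_comp he a _).symm

theorem IsAbsorbing.submatrix_mem_rowStochastic [DecidableEq n] [DecidableEq ι] [PartialOrder α]
    [IsOrderedRing α] (hM : M ∈ rowStochastic α n) (hs : IsAbsorbing M (range e))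
    (he : Injective e) : M.submatrix e e ∈ rowStochastic α ι := by
  rw [mem_rowStochastic_iff_sum] at hM ⊢
  refine ⟨fun a b => hM.1 _ _, fun a => ?_⟩
  simpa [hM.2] using hs.sum_comp he a 1

end Absorbing

section Cesaro

variable {n : Type*} [Fintype n] [DecidableEq n] {P Pstar : Matrix n n ℝ}

theorem isStochastic_iff_mem_rowStochastic : IsStochastic P ↔ P ∈ rowStochastic ℝ n :=
  mem_rowStochastic_iff_sum.symm

theorem isClosed_rowStochastic : IsClosed (rowStochastic ℝ n : Set (Matrix n n ℝ)) := by
  have : (rowStochastic ℝ n : Set (Matrix n n ℝ)) =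
      (⋂ i, ⋂ j, {M | 0 ≤ M i j}) ∩ {M | M *ᵥ 1 = 1} := by
    ext M
    simp [mem_rowStochastic]
  rw [this]
  exact (isClosed_iInter fun i => isClosed_iInter fun j =>
    isClosed_le continuous_const (continuous_id.matrix_elem i j)).inter
    (isClosed_eq (continuous_id.matrix_mulVec continuous_const) continuous_const)

noncomputable def cesaroMean (P : Matrix n n ℝ) (H : ℕ) : Matrix n n ℝ :=
  (H : ℝ)⁻¹ • ∑ k ∈ range H, P ^ k

theorem CesaroLimit.tendsto (hC : CesaroLimit P Pstar) :
    Tendsto (cesaroMean P) atTop (𝓝 Pstar) :=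
  hC

theorem cesaroMean_mem_rowStochastic (hP : P ∈ rowStochastic ℝ n) {H : ℕ} (hH : H ≠ 0) :
    cesaroMean P H ∈ rowStochastic ℝ n := by
  rw [cesaroMean, smul_sum]
  refine convex_rowStochastic.sum_mem (fun _ _ => by positivity) ?_
    fun k _ => pow_mem hP k
  simp [hH]

theorem cesaroMean_mul_eq (P : Matrix n n ℝ) (H : ℕ) :
    cesaroMean P H * P = cesaroMean P H + ((H : ℝ)⁻¹ • P ^ H - (H : ℝ)⁻¹ • 1) := by
  rw [cesaroMean, smul_mul_assoc, ← smul_sub, ← smul_add, ← geom_sum_mul, mul_sub_one,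
    add_sub_cancel]

theorem commute_cesaroMean (P : Matrix n n ℝ) (H : ℕ) : Commute P (cesaroMean P H) :=
  (Commute.sum_right _ _ _ fun k _ => (Commute.refl P).pow_right k).smul_right _

theorem tendsto_inv_smul_pow_of_mem_rowStochastic (hP : P ∈ rowStochastic ℝ n) :
    Tendsto (fun H : ℕ => (H : ℝ)⁻¹ • P ^ H) atTop (𝓝 0) := by
  refine tendsto_pi_nhds.mpr fun a => tendsto_pi_nhds.mpr fun b => ?_
  refine squeeze_zero (fun H => ?_) (fun H => ?_) tendsto_inv_atTop_nhds_zero_nat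
  · exact mul_nonneg (by positivity) (nonneg_of_mem_rowStochastic (pow_mem hP H))
  · exact mul_le_of_le_one_right (by positivity) (le_one_of_mem_rowStochastic (pow_mem hP H))

theorem CesaroLimit.mem_rowStochastic (hP : P ∈ rowStochastic ℝ n)
    (hC : CesaroLimit P Pstar) : Pstar ∈ rowStochastic ℝ n :=
  isClosed_rowStochastic.mem_of_tendsto hC.tendsto
    (eventually_ne_atTop 0 |>.mono fun _ hH => cesaroMean_mem_rowStochastic hP hH)

theorem CesaroLimit.tendsto_mul (hP : P ∈ rowStochastic ℝ n) (hC : CesaroLimit P Pstar) :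
    Tendsto (fun H => cesaroMean P H * P) atTop (𝓝 Pstar) := by
  have hrem := (tendsto_inv_smul_pow_of_mem_rowStochastic hP).sub
    ((tendsto_inv_atTop_nhds_zero_nat (𝕜 := ℝ)).smul_const (1 : Matrix n n ℝ))
  simpa only [cesaroMean_mul_eq, zero_smul, sub_zero, add_zero] using hC.tendsto.add hrem

theorem CesaroLimit.limit_mul_eq (hP : P ∈ rowStochastic ℝ n) (hC : CesaroLimit P Pstar) :
    Pstar * P = Pstar :=
  tendsto_nhds_unique (hC.tendsto.mul_const P) (hC.tendsto_mul hP)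

theorem CesaroLimit.mul_limit_eq (hP : P ∈ rowStochastic ℝ n) (hC : CesaroLimit P Pstar) :
    P * Pstar = Pstar :=
  tendsto_nhds_unique (hC.tendsto.const_mul P)
    ((hC.tendsto_mul hP).congr fun H => (commute_cesaroMean P H).symm.eq)

theorem CesaroLimit.isAbsorbing {s : Set n} (hs : IsAbsorbing P s) (hC : CesaroLimit P Pstar) :
    IsAbsorbing Pstar s := fun x hx y hy => by
  refine tendsto_nhds_unique ((tendsto_pi_nhds.mp (tendsto_pi_nhds.mp hC.tendsto x)) y) ?_
  simp only [cesaroMean, Matrix.smul_apply, Matrix.sum_apply, (hs.pow _) x hx y hy,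
    sum_const_zero, smul_zero, tendsto_const_nhds]

end Cesaro

section Stationary

variable {n : Type*} [Fintype n] [DecidableEq n] {R : Matrix n n ℝ}

/-- The positive part is subinvariant, and a stochastic matrix preserves total mass. -/
theorem vecMul_posPart_eq_self (hR : R ∈ rowStochastic ℝ n) {u : n → ℝ} (hu : u ᵥ* R = u) :
    (fun x => max (u x) 0) ᵥ* R = fun x => max (u x) 0 := by
  set p : n → ℝ := fun x => max (u x) 0
  have hle : ∀ y, p y ≤ (p ᵥ* R) y := fun y => by
    refine max_le ?_ (nonneg_vecMul_of_mem_rowStochastic hR (fun _ => le_max_right _ _) y)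
    calc u y = (u ᵥ* R) y := by rw [hu]
      _ ≤ (p ᵥ* R) y := Finset.sum_le_sum fun x _ =>
          mul_le_mul_of_nonneg_right (le_max_left _ _) (nonneg_of_mem_rowStochastic hR)
  have hmass : ∑ y, p y = ∑ y, (p ᵥ* R) y := by
    simp only [← dotProduct_one, ← dotProduct_mulVec, one_vecMul_of_mem_rowStochastic hR]
  funext y
  exact (((Finset.sum_eq_sum_iff_of_le fun y _ => hle y).mp hmass) y (mem_univ y)).symm

theorem vecMul_pow_eq_self {v : n → ℝ} (hv : v ᵥ* R = v) (k : ℕ) : v ᵥ* R ^ k = v := by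
  induction k with
  | zero => exact vecMul_one v
  | succ k ih => rw [pow_succ, ← vecMul_vecMul, ih, hv]

theorem pos_of_vecMul_eq_self (hR : R ∈ rowStochastic ℝ n) (hirr : ∀ x y, ∃ k, 0 < (R ^ k) x y)
    {p : n → ℝ} (hp0 : ∀ x, 0 ≤ p x) (hp : p ᵥ* R = p) {x : n} (hx : 0 < p x) (y : n) :
    0 < p y := by
  obtain ⟨k, hk⟩ := hirr x y
  calc 0 < p x * (R ^ k) x y := mul_pos hx hk
    _ ≤ (p ᵥ* R ^ k) y :=
      single_le_sum (f := fun z => p z * (R ^ k) z y)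
        (fun z _ => mul_nonneg (hp0 z) (nonneg_of_mem_rowStochastic (pow_mem hR k))) (mem_univ x)
    _ = p y := by rw [vecMul_pow_eq_self hp]

theorem nonpos_of_vecMul_eq_self (hR : R ∈ rowStochastic ℝ n) (hirr : ∀ x y, ∃ k, 0 < (R ^ k) x y)
    {u : n → ℝ} (hu : u ᵥ* R = u) (hsum : ∑ x, u x = 0) (x : n) : u x ≤ 0 := by
  by_contra! hx
  have hpos : ∀ y, 0 < u y := fun y => by
    simpa using pos_of_vecMul_eq_self hR hirr (fun _ => le_max_right _ _)
      (vecMul_posPart_eq_self hR hu) (lt_max_of_lt_left hx) y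
  have : Nonempty n := ⟨x⟩
  exact (Finset.sum_pos (fun y _ => hpos y) univ_nonempty).ne' hsum

theorem le_of_vecMul_eq_self (hR : R ∈ rowStochastic ℝ n) (hirr : ∀ x y, ∃ k, 0 < (R ^ k) x y)
    {v w : n → ℝ} (hv : v ᵥ* R = v) (hw : w ᵥ* R = w) (hsum : ∑ x, v x = ∑ x, w x) (x : n) :
    v x ≤ w x := by
  simpa [sub_nonpos] using nonpos_of_vecMul_eq_self hR hirr (u := v - w)
    (by rw [sub_vecMul, hv, hw]) (by simp [sum_sub_distrib, hsum]) x

theorem eq_of_vecMul_eq_self (hR : R ∈ rowStochastic ℝ n) (hirr : ∀ x y, ∃ k, 0 < (R ^ k) x y)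
    {v w : n → ℝ} (hv : v ᵥ* R = v) (hw : w ᵥ* R = w) (hsum : ∑ x, v x = ∑ x, w x) :
    v = w :=
  funext fun x => le_antisymm (le_of_vecMul_eq_self hR hirr hv hw hsum x)
    (le_of_vecMul_eq_self hR hirr hw hv hsum.symm x)

end Stationary

theorem CesaroLimit.apply_eq_of_isAbsorbing {n ι : Type*} [Fintype n] [DecidableEq n] [Fintype ι]
    [DecidableEq ι] {P Pstar : Matrix n n ℝ} {e : ι → n} (hP : P ∈ rowStochastic ℝ n)
    (hC : CesaroLimit P Pstar) (he : Injective e) (hs : IsAbsorbing P (range e))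
    (hirr : ∀ x y, ∃ k, 0 < (P.submatrix e e ^ k) x y) {g : ι → ℝ} (hg_sum : ∑ x, g x = 1)
    (hg : g ᵥ* P.submatrix e e = g) (a b : ι) : Pstar (e a) (e b) = g b := by
  have hs' := hC.isAbsorbing hs
  have hQ := hs'.submatrix_mem_rowStochastic (hC.mem_rowStochastic hP) he
  have hQR : Pstar.submatrix e e * P.submatrix e e = Pstar.submatrix e e := by
    rw [← hs'.submatrix_mul he, hC.limit_mul_eq hP]
  have hrow := eq_of_vecMul_eq_self (hs.submatrix_mem_rowStochastic hP he) hirr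
    (v := Pstar.submatrix e e a) (by rw [← mul_apply_eq_vecMul, hQR]) hg
    (by rw [sum_row_of_mem_rowStochastic hQ, hg_sum])
  exact congrFun hrow b

theorem isUnit_det_one_sub_of_one_notMem_spectrum {n K L : Type*} [Fintype n] [DecidableEq n]
    [Field K] [Field L] [Algebra K L] (A : Matrix n n K)
    (h : (1 : L) ∉ spectrum L (A.map (algebraMap K L))) : IsUnit (1 - A).det := by
  rw [spectrum.mem_iff, not_not, map_one, isUnit_iff_isUnit_det] at h
  refine isUnit_of_map_unit (algebraMap K L) _ ?_
  rwa [RingHom.map_det, map_sub, map_one]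

theorem eq_nonsing_inv_mul_of_eq_add_mul {m n K : Type*} [Fintype n] [DecidableEq n] [CommRing K]
    {T : Matrix n n K} {X B : Matrix n m K} (hT : IsUnit (1 - T).det) (h : X = B + T * X) :
    X = (1 - T)⁻¹ * B := by
  have hB : (1 - T) * X = B := by rw [Matrix.sub_mul, Matrix.one_mul, sub_eq_iff_eq_add, ← h]
  rw [← hB, nonsing_inv_mul_cancel_left _ _ hT]

section Blocks

variable {l m n o p q α : Type*} [Fintype l] [Fintype m] [NonUnitalNonAssocSemiring α]

theorem Matrix.toBlocks₂₁_mul (M : Matrix (n ⊕ o) (l ⊕ m) α) (N : Matrix (l ⊕ m) (p ⊕ q) α) :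
    (M * N).toBlocks₂₁ = M.toBlocks₂₁ * N.toBlocks₁₁ + M.toBlocks₂₂ * N.toBlocks₂₁ := by
  conv_lhs => rw [← fromBlocks_toBlocks M, ← fromBlocks_toBlocks N, fromBlocks_multiply]
  exact toBlocks_fromBlocks₂₁ ..

theorem Matrix.toBlocks₂₂_mul (M : Matrix (n ⊕ o) (l ⊕ m) α) (N : Matrix (l ⊕ m) (p ⊕ q) α) :
    (M * N).toBlocks₂₂ = M.toBlocks₂₁ * N.toBlocks₁₂ + M.toBlocks₂₂ * N.toBlocks₂₂ := by
  conv_lhs => rw [← fromBlocks_toBlocks M, ← fromBlocks_toBlocks N, fromBlocks_multiply]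
  exact toBlocks_fromBlocks₂₂ ..

theorem Matrix.mul_apply_sigma_of_eq_zero {ι : Type*} [Fintype ι] {ρ : ι → Type*}
    [∀ i, Fintype (ρ i)] (M : Matrix o (Σ i, ρ i) α) (N : Matrix (Σ i, ρ i) p α) {i : ι} {y : p}
    (hN : ∀ j ≠ i, ∀ c, N ⟨j, c⟩ y = 0) (a : o) :
    (M * N) a y = ∑ c, M a ⟨i, c⟩ * N ⟨i, c⟩ y := by
  rw [mul_apply, Fintype.sum_sigma]
  exact Finset.sum_eq_single i (fun j _ hj => sum_eq_zero fun c _ => by rw [hN j hj c, mul_zero])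
    (by simp)

end Blocks

theorem isAbsorbing_range_inl {l τ α : Type*} [Zero α] {P : Matrix (l ⊕ τ) (l ⊕ τ) α}
    (h : ∀ x y, P (.inl x) (.inr y) = 0) : IsAbsorbing P (range Sum.inl) := by
  rintro _ ⟨x, rfl⟩ (z | y) hy
  · exact absurd ⟨z, rfl⟩ hy
  · exact h x y

theorem isAbsorbing_range_inl_sigmaMk {ι τ α : Type*} {ρ : ι → Type*} [Zero α]
    {P : Matrix ((Σ i, ρ i) ⊕ τ) ((Σ i, ρ i) ⊕ τ) α}
    (hblock1 : ∀ i j (x : ρ i) (y : ρ j), i ≠ j → P (.inl ⟨i, x⟩) (.inl ⟨j, y⟩) = 0)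
    (hblock2 : ∀ i (x : ρ i) (y : τ), P (.inl ⟨i, x⟩) (.inr y) = 0) (i : ι) :
    IsAbsorbing P (range fun a : ρ i => .inl ⟨i, a⟩) := by
  rintro _ ⟨x, rfl⟩ (⟨j, y⟩ | y) hy
  · exact hblock1 i j x y (by rintro rfl; exact hy ⟨y, rfl⟩)
  · exact hblock2 i x y

section TransientRows

variable {l τ : Type*} [Fintype l] [DecidableEq l] [Fintype τ] [DecidableEq τ]
  {P Pstar : Matrix (l ⊕ τ) (l ⊕ τ) ℝ}

theorem CesaroLimit.toBlocks₂₂_eq_zero (hP : P ∈ rowStochastic ℝ (l ⊕ τ))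
    (hC : CesaroLimit P Pstar) (hs : IsAbsorbing P (range Sum.inl))
    (hT : IsUnit (1 - P.toBlocks₂₂).det) : Pstar.toBlocks₂₂ = 0 := by
  have h12 : Pstar.toBlocks₁₂ = 0 := by
    ext x y
    exact hC.isAbsorbing hs _ ⟨x, rfl⟩ (.inr y) (by simp)
  simpa using eq_nonsing_inv_mul_of_eq_add_mul hT (B := 0) (X := Pstar.toBlocks₂₂)
    (by conv_lhs => rw [← hC.mul_limit_eq hP, toBlocks₂₂_mul, h12, Matrix.mul_zero])

theorem CesaroLimit.toBlocks₂₁_eq (hP : P ∈ rowStochastic ℝ (l ⊕ τ)) (hC : CesaroLimit P Pstar)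
    (hT : IsUnit (1 - P.toBlocks₂₂).det) :
    Pstar.toBlocks₂₁ = (1 - P.toBlocks₂₂)⁻¹ * (P.toBlocks₂₁ * Pstar.toBlocks₁₁) :=
  eq_nonsing_inv_mul_of_eq_add_mul hT (by conv_lhs => rw [← hC.mul_limit_eq hP, toBlocks₂₁_mul])

end TransientRows

theorem cesaro_canonical_form_general {m : ℕ} {ρ : Fin m → Type*} {τ : Type*}
    [∀ i, Fintype (ρ i)] [∀ i, DecidableEq (ρ i)] [Fintype τ] [DecidableEq τ]
    (P Pstar : Matrix ((Σ i, ρ i) ⊕ τ) ((Σ i, ρ i) ⊕ τ) ℝ)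
    (hP : IsStochastic P) (hC : CesaroLimit P Pstar)
    -- block lower-triangular structure: recurrent classes are closed
    (hblock1 : ∀ (i j : Fin m) (x : ρ i) (y : ρ j), i ≠ j →
      P (Sum.inl ⟨i, x⟩) (Sum.inl ⟨j, y⟩) = 0)
    (hblock2 : ∀ (i : Fin m) (x : ρ i) (y : τ), P (Sum.inl ⟨i, x⟩) (Sum.inr y) = 0)
    -- each recurrent block is irreducible
    (hirr : ∀ (i : Fin m) (x y : ρ i), ∃ k : ℕ,
      0 < ((Matrix.of fun a b => P (Sum.inl ⟨i, a⟩) (Sum.inl ⟨i, b⟩) :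
        Matrix (ρ i) (ρ i) ℝ) ^ k) x y)
    -- the transient block has spectral radius < 1
    (hspecT : ∀ z ∈ spectrum ℂ
      ((Matrix.of fun a b => P (Sum.inr a) (Sum.inr b) : Matrix τ τ ℝ).map
        (algebraMap ℝ ℂ)), ‖z‖ < 1)
    -- `g i` is the (unique) stationary distribution of the `i`-th recurrent block
    (g : ∀ i, ρ i → ℝ)
    (hg_sum : ∀ i, ∑ x, g i x = 1)
    (hg_stat : ∀ i, Matrix.vecMul (g i)
      (Matrix.of fun a b => P (Sum.inl ⟨i, a⟩) (Sum.inl ⟨i, b⟩) : Matrix (ρ i) (ρ i) ℝ)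
        = g i) :
    (∀ (i : Fin m) (x y : ρ i), Pstar (Sum.inl ⟨i, x⟩) (Sum.inl ⟨i, y⟩) = g i y) ∧
    (∀ x y : τ, Pstar (Sum.inr x) (Sum.inr y) = 0) ∧
    (∀ (i : Fin m) (x : τ) (y : ρ i),
      Pstar (Sum.inr x) (Sum.inl ⟨i, y⟩) =
        (((1 - (Matrix.of fun a b => P (Sum.inr a) (Sum.inr b) : Matrix τ τ ℝ))⁻¹ *
          (Matrix.of fun (a : τ) (b : ρ i) => P (Sum.inr a) (Sum.inl ⟨i, b⟩)) *
          (Matrix.of fun (_ b : ρ i) => g i b)) x y)) := by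
  rw [isStochastic_iff_mem_rowStochastic] at hP
  have hT : IsUnit (1 - P.toBlocks₂₂).det :=
    isUnit_det_one_sub_of_one_notMem_spectrum _ fun h => by simpa using hspecT 1 h
  have hclass := isAbsorbing_range_inl_sigmaMk hblock1 hblock2
  have hrec : ∀ i (x y : ρ i), Pstar (.inl ⟨i, x⟩) (.inl ⟨i, y⟩) = g i y := fun i =>
    hC.apply_eq_of_isAbsorbing hP (Sum.inl_injective.comp sigma_mk_injective) (hclass i) (hirr i)
      (hg_sum i) (hg_stat i)
  have h22 := hC.toBlocks₂₂_eq_zero hP (isAbsorbing_range_inl fun x => hblock2 x.1 x.2) hT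
  refine ⟨hrec, fun x y => congrFun (congrFun h22 x) y, fun i x y => ?_⟩
  rw [Matrix.mul_assoc]
  refine (congrFun (congrFun (hC.toBlocks₂₁_eq hP hT) x) ⟨i, y⟩).trans
    (sum_congr rfl fun b _ => congrArg _ ?_)
  dsimp only
  rw [mul_apply_sigma_of_eq_zero (i := i)]
  · rw [mul_apply]
    exact sum_congr rfl fun c _ => congrArg _ (hrec i c y)
  · intro j hj c
    exact hC.isAbsorbing (hclass j) _ ⟨c, rfl⟩ _ (by rintro ⟨_, h⟩; simp_all)

/-- Canonical form: the state space is the disjoint union of `m` recurrent classes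
`ρ i` and a transient set `τ`; `P` is block lower-triangular. The Cesàro limit has
recurrent blocks `1 gᵢᵀ`, transient-to-recurrent blocks `(I - T)⁻¹ Sᵢ R_{i,*}`, and
zero transient-to-transient block. -/
theorem cesaro_canonical_form {m : ℕ} {ρ : Fin m → Type*} {τ : Type*}
    [∀ i, Fintype (ρ i)] [∀ i, DecidableEq (ρ i)] [Fintype τ] [DecidableEq τ]
    (P Pstar : Matrix ((Σ i, ρ i) ⊕ τ) ((Σ i, ρ i) ⊕ τ) ℝ)
    (hP : IsStochastic P) (hC : CesaroLimit P Pstar)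
    -- block lower-triangular structure: recurrent classes are closed
    (hblock1 : ∀ (i j : Fin m) (x : ρ i) (y : ρ j), i ≠ j →
      P (Sum.inl ⟨i, x⟩) (Sum.inl ⟨j, y⟩) = 0)
    (hblock2 : ∀ (i : Fin m) (x : ρ i) (y : τ), P (Sum.inl ⟨i, x⟩) (Sum.inr y) = 0)
    -- each recurrent block is irreducible
    (hirr : ∀ (i : Fin m) (x y : ρ i), ∃ k : ℕ,
      0 < ((Matrix.of fun a b => P (Sum.inl ⟨i, a⟩) (Sum.inl ⟨i, b⟩) :
        Matrix (ρ i) (ρ i) ℝ) ^ k) x y)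
    -- the transient block has spectral radius < 1
    (hspecT : ∀ z ∈ spectrum ℂ
      ((Matrix.of fun a b => P (Sum.inr a) (Sum.inr b) : Matrix τ τ ℝ).map
        (algebraMap ℝ ℂ)), ‖z‖ < 1)
    -- `g i` is the (unique) stationary distribution of the `i`-th recurrent block
    (g : ∀ i, ρ i → ℝ)
    (hg_nonneg : ∀ i x, 0 ≤ g i x) (hg_sum : ∀ i, ∑ x, g i x = 1)
    (hg_stat : ∀ i, Matrix.vecMul (g i)
      (Matrix.of fun a b => P (Sum.inl ⟨i, a⟩) (Sum.inl ⟨i, b⟩) : Matrix (ρ i) (ρ i) ℝ)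
        = g i) :
    (∀ (i : Fin m) (x y : ρ i), Pstar (Sum.inl ⟨i, x⟩) (Sum.inl ⟨i, y⟩) = g i y) ∧
    (∀ x y : τ, Pstar (Sum.inr x) (Sum.inr y) = 0) ∧
    (∀ (i : Fin m) (x : τ) (y : ρ i),
      Pstar (Sum.inr x) (Sum.inl ⟨i, y⟩) =
        (((1 - (Matrix.of fun a b => P (Sum.inr a) (Sum.inr b) : Matrix τ τ ℝ))⁻¹ *
          (Matrix.of fun (a : τ) (b : ρ i) => P (Sum.inr a) (Sum.inl ⟨i, b⟩)) *
          (Matrix.of fun (_ b : ρ i) => g i b)) x y)) :=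
  cesaro_canonical_form_general P Pstar hP hC hblock1 hblock2 hirr hspecT g hg_sum hg_stat
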